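/- arXiv:1610.03377 — 3 statements merged into one kernel-verified Lean document; each statement's English description precedes it below -/
import Mathlib

section
/- Let f : ℝ → (0,∞) be continuous and strictly positive, let A : (-∞, r) → ℝ be continuous (r > 0), τ₀ ≥ 0, and φ : (-∞,0] → ℝ continuous with A = φ on (-∞,0]. Then for every t ∈ [0, r) there exists a unique τ(t) ∈ [0, t + τ₀] such that ∫_{t-τ(t)}^{t} f(A(σ)) dσ = ∫_{-τ₀}^{0} f(φ(σ)) dσ. -/
open Set intervalIntegral

/-- Existence and uniqueness of the delay `τ(t)` solving the integral equation. -/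
theorem stmt0 (f A φ : ℝ → ℝ) (r τ₀ : ℝ) (hr : 0 < r) (hτ₀ : 0 ≤ τ₀)
    (hf : Continuous f) (hfpos : ∀ x, 0 < f x)
    (hA : ContinuousOn A (Iio r)) (hφ : ContinuousOn φ (Iic 0))
    (hAφ : ∀ t ≤ (0:ℝ), A t = φ t) :
    ∀ t ∈ Ico (0:ℝ) r, ∃! τ : ℝ, τ ∈ Icc 0 (t + τ₀) ∧
      (∫ σ in (t - τ)..t, f (A σ)) = ∫ σ in (-τ₀)..(0:ℝ), f (φ σ) := by
  intro t ht
  obtain ⟨ht0, htr⟩ := ht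
  have hcont : ContinuousOn (fun σ => f (A σ)) (Iio r) := hf.comp_continuousOn hA
  -- integrability on any subinterval of Iio r
  have hInt : ∀ a b : ℝ, a < r → b < r → IntervalIntegrable (fun σ => f (A σ)) MeasureTheory.volume a b := by
    intro a b ha hb
    apply (hcont.mono _).intervalIntegrable
    intro x hx
    exact lt_of_le_of_lt hx.2 (max_lt_iff.mpr ⟨ha, hb⟩)
  set g : ℝ → ℝ := fun τ => ∫ σ in (t - τ)..t, f (A σ) with hg
  set c : ℝ := ∫ σ in (-τ₀)..(0:ℝ), f (φ σ) with hc
  -- strict monotonicity on Icc 0 (t+τ₀)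
  have hmono : StrictMonoOn g (Icc 0 (t + τ₀)) := by
    intro τ₁ h1 τ₂ h2 h12
    have hsplit : g τ₂ = (∫ σ in (t - τ₂)..(t - τ₁), f (A σ)) + g τ₁ := by
      rw [hg]
      exact (intervalIntegral.integral_add_adjacent_intervals (hInt _ _ (by linarith [h1.1]) (by linarith [h1.1])) (hInt _ _ (by linarith [h1.1]) htr)).symm
    have hpos : 0 < ∫ σ in (t - τ₂)..(t - τ₁), f (A σ) := by
      apply intervalIntegral.intervalIntegral_pos_of_pos_on (hInt _ _ (by linarith [h1.1]) (by linarith [h1.1]))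
      · intro x _; exact hfpos _
      · linarith
    linarith
  -- continuity of g on Icc 0 (t+τ₀)
  have hgcont : ContinuousOn g (Icc 0 (t + τ₀)) := by
    have hF : ContinuousOn (fun x => ∫ σ in x..t, f (A σ)) (Icc (-τ₀) t) := by
      have : uIcc (-τ₀) t = Icc (-τ₀) t := uIcc_of_le (by linarith)
      have h_int : MeasureTheory.IntegrableOn (fun σ => f (A σ)) (uIcc (-τ₀) t) MeasureTheory.volume := by
        rw [this]
        exact (hcont.mono (fun x hx => lt_of_le_of_lt hx.2 htr)).integrableOn_compact isCompact_Icc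
      rw [← this]
      exact continuousOn_primitive_interval_left h_int
    have hmap : MapsTo (fun τ : ℝ => t - τ) (Icc 0 (t + τ₀)) (Icc (-τ₀) t) := by
      intro τ hτ
      simp only [mem_Icc]
      constructor <;> [linarith [hτ.2]; linarith [hτ.1]]
    exact hF.comp ((continuous_const.sub continuous_id).continuousOn) hmap
  -- endpoint values
  have hg0 : g 0 = 0 := by simp [hg]
  have hgend : c ≤ g (t + τ₀) := by
    have hsplit : g (t + τ₀) = (∫ σ in (-τ₀)..(0:ℝ), f (A σ)) + ∫ σ in (0:ℝ)..t, f (A σ) := by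
      have heq : g (t + τ₀) = ∫ σ in (-τ₀)..t, f (A σ) := by
        simp only [hg]; congr 1; ring
      rw [heq]
      exact (intervalIntegral.integral_add_adjacent_intervals (hInt _ _ (by linarith) hr) (hInt _ _ hr htr)).symm
    have h1 : (∫ σ in (-τ₀)..(0:ℝ), f (A σ)) = c := by
      rw [hc]
      apply intervalIntegral.integral_congr
      intro x hx
      rw [uIcc_of_le (by linarith)] at hx
      exact congrArg f (hAφ x hx.2)
    have h2 : 0 ≤ ∫ σ in (0:ℝ)..t, f (A σ) := by
      apply intervalIntegral.integral_nonneg ht0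
      intro x _; exact (hfpos _).le
    linarith
  have hc0 : 0 ≤ c := by
    apply intervalIntegral.integral_nonneg (by linarith)
    intro x _; exact (hfpos _).le
  -- IVT
  have hsub : Icc (g 0) (g (t + τ₀)) ⊆ g '' Icc 0 (t + τ₀) :=
    intermediate_value_Icc (by linarith) hgcont
  obtain ⟨τ, hτmem, hτeq⟩ := hsub ⟨by rw [hg0]; exact hc0, hgend⟩
  refine ⟨τ, ⟨hτmem, hτeq⟩, ?_⟩
  intro τ' ⟨hτ'mem, hτ'eq⟩
  exact hmono.injOn hτ'mem hτmem (hτ'eq.trans hτeq.symm)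
end

section
/- Let f : ℝ → (0,∞) be continuous and strictly positive, A : (-∞, r) → ℝ continuous, and suppose τ : [0,r) → [0,∞) is continuously differentiable and satisfies the ODE τ'(t) = 1 - f(A(t))/f(A(t - τ(t))) with τ(0) = τ₀. Then τ satisfies the integral equation ∫_{t-τ(t)}^{t} f(A(σ)) dσ = ∫_{-τ₀}^{0} f(A(σ)) dσ for all t ∈ [0, r). -/
open Set intervalIntegral

/-
Write `d t = t - τ t` for the lag and `F` for an antiderivative of `f ∘ A`. The ODE says exactly
that `f (A (d t)) * d' t = f (A t)`, so `t ↦ F t - F (d t) = ∫ σ in d t..t, f (A σ)` has zero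
derivative on `[0, r)` and keeps its value `∫ σ in -τ₀..0, f (A σ)` at `t = 0`.
-/

section Lag

variable {g : ℝ → ℝ} {U : Set ℝ}

theorem ContinuousOn.hasDerivAt_integral_of_mem (hU : IsOpen U) (hU' : U.OrdConnected)
    (hg : ContinuousOn g U) {a x : ℝ} (ha : a ∈ U) (hx : x ∈ U) :
    HasDerivAt (fun u => ∫ σ in a..u, g σ) (g x) x :=
  integral_hasDerivAt_right ((hg.mono (hU'.uIcc_subset ha hx)).intervalIntegrable)
    (hg.stronglyMeasurableAtFilter hU x hx) (hg.continuousAt (hU.mem_nhds hx))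

theorem integral_lag_window_eq (hU : IsOpen U) (hU' : U.OrdConnected) (hg : ContinuousOn g U)
    {s : Set ℝ} (hs : Convex ℝ s) (hsU : s ⊆ U) {d d' : ℝ → ℝ} (hdU : ∀ t ∈ s, d t ∈ U)
    (hd : ∀ t ∈ s, HasDerivAt d (d' t) t) (hbal : ∀ t ∈ s, g (d t) * d' t = g t)
    {t₀ t : ℝ} (ht₀ : t₀ ∈ s) (ht : t ∈ s) :
    ∫ σ in d t..t, g σ = ∫ σ in d t₀..t₀, g σ := by
  set F : ℝ → ℝ := fun u => ∫ σ in t₀..u, g σ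
  have hF : ∀ x ∈ U, HasDerivAt F (g x) x := fun x hx =>
    hg.hasDerivAt_integral_of_mem hU hU' (hsU ht₀) hx
  have hwindow : ∀ t ∈ s, ∫ σ in d t..t, g σ = F t - F (d t) := fun t ht =>
    (integral_interval_sub_left
      ((hg.mono (hU'.uIcc_subset (hsU ht₀) (hsU ht))).intervalIntegrable)
      ((hg.mono (hU'.uIcc_subset (hsU ht₀) (hdU t ht))).intervalIntegrable)).symm
  have hderiv : ∀ t ∈ s, HasDerivWithinAt (fun t => F t - F (d t)) 0 s t := by
    intro t ht
    have h := (hF t (hsU ht)).sub ((hF (d t) (hdU t ht)).comp t (hd t ht))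
    rw [hbal t ht, sub_self] at h
    exact h.hasDerivWithinAt
  have hconst := hs.norm_image_sub_le_of_norm_hasDerivWithin_le (C := 0) hderiv
    (fun _ _ => norm_zero.le) ht₀ ht
  rw [zero_mul, norm_le_zero_iff, sub_eq_zero] at hconst
  rw [hwindow t ht, hwindow t₀ ht₀, hconst]

end Lag

theorem stmt1_general (f A τ : ℝ → ℝ) (r τ₀ : ℝ)
    (hf : Continuous f) (hfpos : ∀ x, 0 < f x)
    (hA : ContinuousOn A (Iio r))
    (hτnonneg : ∀ t ∈ Ico (0:ℝ) r, 0 ≤ τ t)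
    (hode : ∀ t ∈ Ico (0:ℝ) r, HasDerivAt τ (1 - f (A t) / f (A (t - τ t))) t)
    (hτ0 : τ 0 = τ₀) :
    ∀ t ∈ Ico (0:ℝ) r,
      (∫ σ in (t - τ t)..t, f (A σ)) = ∫ σ in (-τ₀)..(0:ℝ), f (A σ) := by
  intro t ht
  have hlag : ∀ t ∈ Ico (0:ℝ) r, t - τ t ∈ Iio r := fun t ht =>
    (sub_le_self t (hτnonneg t ht)).trans_lt ht.2
  have hbal : ∀ t ∈ Ico (0:ℝ) r,
      f (A (t - τ t)) * (1 - (1 - f (A t) / f (A (t - τ t)))) = f (A t) := fun t _ => by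
    rw [sub_sub_cancel, mul_div_cancel₀ _ (hfpos _).ne']
  have h := integral_lag_window_eq isOpen_Iio ordConnected_Iio (hf.comp_continuousOn hA)
    (convex_Ico 0 r) Ico_subset_Iio_self hlag (fun t ht => (hasDerivAt_id t).sub (hode t ht))
    hbal ⟨le_rfl, ht.1.trans_lt ht.2⟩ ht
  rw [hτ0, zero_sub] at h
  exact h

/-- If `τ` solves the ODE `τ' = 1 - f(A(t))/f(A(t-τ(t)))` with `τ(0) = τ₀`,
then it solves the integral equation. -/
theorem stmt1 (f A τ : ℝ → ℝ) (r τ₀ : ℝ) (hr : 0 < r) (hτ₀ : 0 ≤ τ₀)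
    (hf : Continuous f) (hfpos : ∀ x, 0 < f x)
    (hA : ContinuousOn A (Iio r))
    (hτnonneg : ∀ t ∈ Ico (0:ℝ) r, 0 ≤ τ t)
    (hode : ∀ t ∈ Ico (0:ℝ) r, HasDerivAt τ (1 - f (A t) / f (A (t - τ t))) t)
    (hτ0 : τ 0 = τ₀) :
    ∀ t ∈ Ico (0:ℝ) r,
      (∫ σ in (t - τ t)..t, f (A σ)) = ∫ σ in (-τ₀)..(0:ℝ), f (A σ) :=
  stmt1_general f A τ r τ₀ hf hfpos hA hτnonneg hode hτ0
end

section
/- Let f be continuous and strictly positive and let τ : [0,r) → [0,∞) be C¹ and satisfy τ'(t) = 1 - f(A(t))/f(A(t-τ(t))) with τ(0) = τ₀, where A is continuous. If τ₀ > 0 then τ(t) > 0 for all t ∈ [0, r); if τ₀ = 0 then τ(t) = 0 for all t ∈ [0, r). -/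
/-!
Let `F` be a primitive of the positive function `g = f ∘ A`. Along the delay equation,
`d/dt F (t - τ t) = g (t - τ t) (1 - τ' t) = g t`, so `F (t - τ t) - F t` is constant, equal to
`F (-τ₀) - F 0`. Since `F` is strictly increasing, `τ t = 0` holds exactly when this constant
vanishes, that is exactly when `τ₀ = 0`.
-/

open Set

theorem hasDerivAt_integral_of_continuousOn {g : ℝ → ℝ} {s : Set ℝ} {a x : ℝ}
    (hs : IsOpen s) (hs' : s.OrdConnected) (hg : ContinuousOn g s) (ha : a ∈ s) (hx : x ∈ s) :
    HasDerivAt (fun y => ∫ t in a..y, g t) (g x) x :=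
  intervalIntegral.integral_hasDerivAt_right
    ((hg.mono (hs'.uIcc_subset ha hx)).intervalIntegrable)
    (hg.stronglyMeasurableAtFilter hs x hx) (hg.continuousAt (hs.mem_nhds hx))

theorem strictMonoOn_Iio_of_hasDerivAt_pos {F g : ℝ → ℝ} {r : ℝ}
    (hF : ∀ x < r, HasDerivAt F (g x) x) (hg : ∀ x < r, 0 < g x) :
    StrictMonoOn F (Iio r) :=
  strictMonoOn_of_hasDerivWithinAt_pos (convex_Iio r)
    (fun x hx => (hF x hx).continuousAt.continuousWithinAt)
    (fun x hx => (hF x (mem_Iio.mp (interior_subset hx))).hasDerivWithinAt)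
    (fun x hx => hg x (mem_Iio.mp (interior_subset hx)))

section DelayEquation

variable {F g τ : ℝ → ℝ}

theorem hasDerivAt_sub_comp_delay {t : ℝ} (hFσ : HasDerivAt F (g (t - τ t)) (t - τ t))
    (hFt : HasDerivAt F (g t) t) (hg : g (t - τ t) ≠ 0)
    (hτ : HasDerivAt τ (1 - g t / g (t - τ t)) t) :
    HasDerivAt (fun t => F (t - τ t) - F t) 0 t := by
  have hσ : HasDerivAt (fun t => t - τ t) (1 - (1 - g t / g (t - τ t))) t :=
    (hasDerivAt_id t).sub hτ
  have hrate : g (t - τ t) * (1 - (1 - g t / g (t - τ t))) - g t = 0 := by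
    field_simp
    ring
  have h : HasDerivAt (fun t => F (t - τ t) - F t)
      (g (t - τ t) * (1 - (1 - g t / g (t - τ t))) - g t) t := (hFσ.comp t hσ).sub hFt
  rwa [hrate] at h

theorem sub_comp_delay_eq {r : ℝ} (hF : ∀ x < r, HasDerivAt F (g x) x) (hg : ∀ x < r, g x ≠ 0)
    (hτ : ∀ t ∈ Ico 0 r, HasDerivAt τ (1 - g t / g (t - τ t)) t)
    (hτ_nonneg : ∀ t ∈ Ico 0 r, 0 ≤ τ t) {t : ℝ} (ht : t ∈ Ico 0 r) :
    F (t - τ t) - F t = F (-τ 0) - F 0 := by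
  have hderiv : ∀ s ∈ Ico 0 r, HasDerivAt (fun t => F (t - τ t) - F t) 0 s := fun s hs =>
    have hσ : s - τ s < r := by linarith [hτ_nonneg s hs, hs.2]
    hasDerivAt_sub_comp_delay (hF _ hσ) (hF s hs.2) (hg _ hσ) (hτ s hs)
  have hconst := constant_of_has_deriv_right_zero (f := fun t => F (t - τ t) - F t)
    (fun s hs => (hderiv s ⟨hs.1, hs.2.trans_lt ht.2⟩).continuousAt.continuousWithinAt)
    (fun s hs => (hderiv s ⟨hs.1, hs.2.trans ht.2⟩).hasDerivWithinAt) t ⟨ht.1, le_rfl⟩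
  simpa only [zero_sub] using hconst

end DelayEquation

theorem stmt3_general (f A τ : ℝ → ℝ) (r τ₀ : ℝ) (hr : 0 < r)
    (hf : Continuous f) (hfpos : ∀ x, 0 < f x)
    (hA : ContinuousOn A (Iio r))
    (hode : ∀ t ∈ Ico (0:ℝ) r, HasDerivAt τ (1 - f (A t) / f (A (t - τ t))) t)
    (hτnonneg : ∀ t ∈ Ico (0:ℝ) r, 0 ≤ τ t)
    (hτ0 : τ 0 = τ₀) :
    (0 < τ₀ → ∀ t ∈ Ico (0:ℝ) r, 0 < τ t) ∧
      (τ₀ = 0 → ∀ t ∈ Ico (0:ℝ) r, τ t = 0) := by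
  set F : ℝ → ℝ := fun x => ∫ s in (0:ℝ)..x, f (A s)
  have hF : ∀ x < r, HasDerivAt F (f (A x)) x := fun _ hx =>
    hasDerivAt_integral_of_continuousOn isOpen_Iio ordConnected_Iio
      (hf.comp_continuousOn hA) hr hx
  have hF_inj : InjOn F (Iio r) := (strictMonoOn_Iio_of_hasDerivAt_pos hF fun _ _ => hfpos _).injOn
  have hinv : ∀ t ∈ Ico 0 r, F (t - τ t) - F t = F (-τ₀) - F 0 := fun t ht => by
    rw [← hτ0]; exact sub_comp_delay_eq hF (fun _ _ => (hfpos _).ne') hode hτnonneg ht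
  refine ⟨fun hτ₀ t ht => (hτnonneg t ht).lt_of_ne' fun hτt => ?_, fun hτ₀ t ht => ?_⟩
  · have hF_eq : F (-τ₀) = F 0 := by
      have := hinv t ht
      rw [hτt, sub_zero, sub_self] at this
      linarith
    linarith [hF_inj (show -τ₀ < r by linarith) hr hF_eq]
  · have hF_eq : F (t - τ t) = F t := by
      have := hinv t ht
      rw [hτ₀, neg_zero, sub_self] at this
      linarith
    have hσ : t - τ t < r := by linarith [hτnonneg t ht, ht.2]
    linarith [hF_inj hσ ht.2 hF_eq]

/-- Sign preservation for the delay: positive initial delay stays positive,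
zero initial delay stays zero. -/
theorem stmt3 (f A τ : ℝ → ℝ) (r τ₀ : ℝ) (hr : 0 < r)
    (hf : Continuous f) (hfpos : ∀ x, 0 < f x)
    (hA : ContinuousOn A (Iio r))
    (hode : ∀ t ∈ Ico (0:ℝ) r, HasDerivAt τ (1 - f (A t) / f (A (t - τ t))) t)
    (hτcont : ContinuousOn (fun t => 1 - f (A t) / f (A (t - τ t))) (Ico 0 r))
    (hτnonneg : ∀ t ∈ Ico (0:ℝ) r, 0 ≤ τ t)
    (hτ0 : τ 0 = τ₀) :
    (0 < τ₀ → ∀ t ∈ Ico (0:ℝ) r, 0 < τ t) ∧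
      (τ₀ = 0 → ∀ t ∈ Ico (0:ℝ) r, τ t = 0) :=
  stmt3_general f A τ r τ₀ hr hf hfpos hA hode hτnonneg hτ0
end
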